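/- arXiv:1906.05729 — 2 statements merged into one kernel-verified Lean document; each statement's English description precedes it below -/
import Mathlib

section
/- Every c.p.o. endowed with the Scott topology is a contractible topological space. -/
/-- Every c.p.o. endowed with the Scott topology is contractible. -/
theorem scott_contractibleSpace
    {D : Type*} [PartialOrder D] [OrderBot D] [TopologicalSpace D]
    [Topology.IsScott D Set.univ]
    (hcpo : ∀ S : Set D, S.Nonempty → DirectedOn (· ≤ ·) S → ∃ x, IsLUB S x) :
    ContractibleSpace D := by
  have hcont : Continuous fun p : unitInterval × D => if p.1 = 1 then (⊥ : D) else p.2 := by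
    rw [continuous_def]
    intro U hU
    by_cases hbot : (⊥ : D) ∈ U
    · have hUuniv : U = Set.univ :=
        Set.eq_univ_of_forall fun x =>
          Topology.IsScott.isUpperSet_of_isOpen (D := Set.univ) hU bot_le hbot
      simp [hUuniv]
    · have hpre : (fun p : unitInterval × D => if p.1 = 1 then (⊥ : D) else p.2) ⁻¹' U =
          ({1}ᶜ : Set unitInterval) ×ˢ U := by
        ext ⟨t, x⟩
        by_cases ht : t = 1 <;> simp [ht, hbot]
      rw [hpre]
      exact (isOpen_compl_singleton).prod hU
  rw [contractible_iff_id_nullhomotopic]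
  refine ⟨⊥, ⟨⟨⟨fun p => if p.1 = 1 then ⊥ else p.2, hcont⟩, ?_, ?_⟩⟩⟩
  · intro x; simp
  · intro x; simp
end

section
/- Let D be a c.p.o. endowed with the Scott topology, and let a, b ∈ D. Any two continuous paths p, q : [0,1] → D from a to b are path-homotopic (homotopic relative to their endpoints). -/
/-- Let `D` be a c.p.o. endowed with the Scott topology, with `a, b ∈ D`.
Any two continuous paths from `a` to `b` are path-homotopic. -/
theorem scott_paths_homotopic
    {D : Type*} [PartialOrder D] [OrderBot D] [TopologicalSpace D]
    [Topology.IsScott D Set.univ]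
    (hcpo : ∀ S : Set D, S.Nonempty → DirectedOn (· ≤ ·) S → ∃ x, IsLUB S x)
    (a b : D) (p q : Path a b) :
    p.Homotopic q := by
  -- Scott open sets are upper sets; any open set containing ⊥ is everything.
  have hupper : ∀ U : Set D, IsOpen U → (⊥ : D) ∈ U → U = Set.univ := by
    intro U hU hbot
    have h := Topology.IsScott.isUpperSet_of_isOpen (D := Set.univ) hU
    ext x; simp only [Set.mem_univ, iff_true]
    exact h (bot_le : (⊥ : D) ≤ x) hbot
  -- The map (s, x) ↦ (if s = 1 then ⊥ else x) is continuous.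
  have hcont : Continuous fun z : unitInterval × D => if z.1 = 1 then (⊥ : D) else z.2 := by
    rw [continuous_def]
    intro U hU
    by_cases hbot : (⊥ : D) ∈ U
    · have : U = Set.univ := hupper U hU hbot
      subst this
      simpa using isOpen_univ
    · have hset : (fun z : unitInterval × D => if z.1 = 1 then (⊥ : D) else z.2) ⁻¹' U
          = ({(1 : unitInterval)}ᶜ) ×ˢ U := by
        ext ⟨s, x⟩
        by_cases hs : s = 1 <;> simp [hs, hbot]
      rw [hset]
      exact (isOpen_compl_singleton).prod hU
  -- Hence the identity is nullhomotopic and D is contractible.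
  have hnull : (ContinuousMap.id D).Nullhomotopic := by
    refine ⟨⊥, ⟨⟨⟨fun z => if z.1 = 1 then (⊥ : D) else z.2, hcont⟩, ?_, ?_⟩⟩⟩
    · intro x; simp
    · intro x; simp
  have : ContractibleSpace D := (contractible_iff_id_nullhomotopic D).mpr hnull
  exact SimplyConnectedSpace.paths_homotopic p q
end
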